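/- (Sufficiency of species equivalence for ordinary lumpability.) Let R be a reaction network over a species type S and let ≈ be a species equivalence for R with multiset lifting ≈ₗ. Then ≈ₗ is an ordinarily lumpable partition of the continuous-time Markov chain of R on the full state space of multisets over S: for all states σ, σ' with σ ≈ₗ σ' and every state τ, q[σ, {θ | θ ≈ₗ τ}] = q[σ', {θ | θ ≈ₗ τ}]. -/

import Mathlib

open Classical

noncomputable section

/-- A reaction of a stochastic mass-action network:
reagent multiset, kinetic parameter, product multiset. -/
structure Reaction (S : Type*) where
  reag : Multiset S
  rate : ℝ
  prod : Multiset S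

variable {S : Type*}

/-- `classCount sd s σ` is the cumulative multiplicity in `σ` of the species in the
≈-equivalence class of `s` (every ≈-class is of this form). -/
def classCount (sd : Setoid S) (s : S) (σ : Multiset S) : ℕ :=
  (σ.filter (sd.r s)).card

/-- The multiset lifting `≈ₗ` of an equivalence relation `≈` on species:
two multisets are related iff they have the same cumulative multiplicity
of every ≈-equivalence class. -/
def mlift (sd : Setoid S) (σ σ' : Multiset S) : Prop :=
  ∀ s : S, classCount sd s σ = classCount sd s σ'

/-- Cumulative multiplicity in `σ` of an ≈-equivalence class given as an
element of the quotient. -/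
def classCountQ (sd : Setoid S) (H : Quotient sd) (σ : Multiset S) : ℕ :=
  (σ.filter (fun x => Quotient.mk sd x = H)).card

/-- The multiset lifting is itself an equivalence relation on multisets. -/
def mliftSetoid (sd : Setoid S) : Setoid (Multiset S) :=
  ⟨mlift sd, ⟨fun _ _ => rfl, fun h s => (h s).symm, fun h1 h2 s => (h1 s).trans (h2 s)⟩⟩

/-- The set of reagent multisets of a reaction network. -/
def Reags (R : Finset (Reaction S)) : Finset (Multiset S) := R.image Reaction.reag

/-- The set of product multisets of a reaction network. -/
def Prods (R : Finset (Reaction S)) : Finset (Multiset S) := R.image Reaction.prod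

/-- Sum of the kinetic parameters of all reactions with reagents `ρ` and products `π`. -/
def rrOff (R : Finset (Reaction S)) (ρ π : Multiset S) : ℝ :=
  ∑ x ∈ R.filter (fun x => x.reag = ρ ∧ x.prod = π), x.rate

/-- The reaction rate `rr(ρ,π)`: the sum of the kinetic parameters of the reactions from
`ρ` to `π` when `ρ ≠ π`, with diagonal correction `rr(ρ,ρ) = -∑_{π' ∈ Prod(R), π' ≠ ρ} rr(ρ,π')`. -/
def rr (R : Finset (Reaction S)) (ρ π : Multiset S) : ℝ :=
  if ρ = π then -∑ π' ∈ (Prods R).erase ρ, rrOff R ρ π'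
  else rrOff R ρ π

/-- Cumulative reaction rate `rr[ρ,B] = ∑_{π ∈ B ∩ (Prod(R) ∪ {ρ})} rr(ρ,π)`. -/
def rrSet (R : Finset (Reaction S)) (ρ : Multiset S) (B : Set (Multiset S)) : ℝ :=
  ∑ π ∈ (insert ρ (Prods R)).filter (· ∈ B), rr R ρ π

/-- Mass-action propensity of a reaction in state `σ`. -/
def propensity (σ : Multiset S) (x : Reaction S) : ℝ :=
  x.rate * ∏ s ∈ x.reag.toFinset, ((σ.count s).choose (x.reag.count s) : ℝ)

/-- Sum of the propensities in `σ` of all reactions leading from state `σ` to state `θ`. -/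
def qOff (R : Finset (Reaction S)) (σ θ : Multiset S) : ℝ :=
  ∑ x ∈ R.filter (fun x => x.reag ≤ σ ∧ σ - x.reag + x.prod = θ), propensity σ x

/-- The (finitely many) states reachable from `σ` in one reaction. -/
def succs (R : Finset (Reaction S)) (σ : Multiset S) : Finset (Multiset S) :=
  (R.filter (fun x => x.reag ≤ σ)).image (fun x => σ - x.reag + x.prod)

/-- CTMC transition rate `q(σ,θ)` of the Markov chain of the network, with the
convention `q(σ,σ) = -∑_{θ ≠ σ} q(σ,θ)`. -/
def q (R : Finset (Reaction S)) (σ θ : Multiset S) : ℝ :=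
  if σ = θ then -∑ θ' ∈ (succs R σ).erase σ, qOff R σ θ'
  else qOff R σ θ

/-- Aggregate transition rate `q[σ,B] = ∑_{θ ∈ B} q(σ,θ)` (finitely many nonzero terms). -/
def qSet (R : Finset (Reaction S)) (σ : Multiset S) (B : Set (Multiset S)) : ℝ :=
  ∑ θ ∈ (insert σ (succs R σ)).filter (· ∈ B), q R σ θ

/-- All kinetic parameters of the network are positive. -/
def posRates (R : Finset (Reaction S)) : Prop := ∀ x ∈ R, 0 < x.rate

/-- Species equivalence (SE): for all related species `s ≈ s'`, every context `ρ` with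
`s+ρ` or `s'+ρ` a reagent multiset of `R`, and every ≈ₗ-class containing at least one
product multiset (represented by `π₀ ∈ Prod(R)`), the cumulative reaction rates agree. -/
def isSE (sd : Setoid S) (R : Finset (Reaction S)) : Prop :=
  ∀ s s' : S, sd.r s s' → ∀ ρ : Multiset S,
    ((s ::ₘ ρ) ∈ Reags R ∨ (s' ::ₘ ρ) ∈ Reags R) →
    ∀ π₀ ∈ Prods R,
      rrSet R (s ::ₘ ρ) {π | mlift sd π₀ π} = rrSet R (s' ::ₘ ρ) {π | mlift sd π₀ π}

/-- `f` is a representative map for the equivalence `sd`. -/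
def IsRep (sd : Setoid S) (f : S → S) : Prop :=
  (∀ s : S, sd.r (f s) s) ∧ ∀ s s' : S, sd.r s s' → f s = f s'

/-- The reduced reaction network of `R` by the representative map `f`: one reaction
`(ρ̂, β, π̂)` for each pair `(ρ̂, π̂)` with `ρ̂ ∈ Reag(R)`, `f(ρ̂) = ρ̂`, `f(π̂) = π̂` and
`β = ∑ { α | (ρ̂,α,π) ∈ R, f(π) = π̂ }` positive. -/
def reduced (R : Finset (Reaction S)) (f : S → S) : Finset (Reaction S) :=
  ((((R.image (fun x => (x.reag, x.prod.map f))).filter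
      (fun p => p.1.map f = p.1)).image
    (fun p => (⟨p.1, ∑ x ∈ R.filter (fun x => x.reag = p.1 ∧ x.prod.map f = p.2), x.rate,
      p.2⟩ : Reaction S)))).filter (fun x => 0 < x.rate)

/-- SMB-reaction rate: sum of parameters with no diagonal correction. -/
def rrSMBSet (R : Finset (Reaction S)) (ρ : Multiset S) (B : Set (Multiset S)) : ℝ :=
  ∑ π ∈ (Prods R).filter (· ∈ B), rrOff R ρ π

/-- Syntactic Markovian bisimulation. -/
def isSMB (sd : Setoid S) (R : Finset (Reaction S)) : Prop :=
  ∀ s s' : S, sd.r s s' → ∀ ρ π₀ : Multiset S,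
    rrSMBSet R (s ::ₘ ρ) {π | mlift sd π₀ π} = rrSMBSet R (s' ::ₘ ρ) {π | mlift sd π₀ π}

/-!
By mass action, the rate from a state `σ` into a set `B` of states is the sum, over the
sub-multisets `ρ` of `σ` counted with multiplicity (`σ.powerset`), of the reaction rates
`rr[ρ, {π | σ - ρ + π ∈ B}]`. When `B` is the `≈ₗ`-class of `τ`, the set of products is
`{π | σ + π ≈ₗ τ + ρ}`: it is empty or an `≈ₗ`-class, and it only depends on the classes of
`σ` and `ρ`. Species equivalence makes `rr[ρ, M]`, for an `≈ₗ`-class `M`, invariant under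
replacing one species of `ρ` by an equivalent one: directly when `M` contains a product, and
through the total outflow of `ρ`, which is a sum over the classes of products, when it does
not. Since `≈ₗ` is generated by such replacements, these rates are `≈ₗ`-invariant in `ρ`.
Finally, replacing a species `s` of `σ` by `s' ≈ s` splits `σ.powerset` into the
sub-multisets without that copy of `s` and the ones with it, so the whole sum is
`≈ₗ`-invariant in `σ`.
-/

namespace Multiset

variable {α : Type*} [DecidableEq α]

theorem count_powerset_eq_prod_choose_of_subset (σ ρ : Multiset α) {T : Finset α}
    (hT : ρ.toFinset ⊆ T) :
    σ.powerset.count ρ = ∏ s ∈ T, (σ.count s).choose (ρ.count s) := by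
  induction σ using Multiset.induction_on generalizing ρ with
  | empty =>
    rw [powerset_zero, count_singleton]
    split_ifs with hρ
    · simp [hρ]
    · obtain ⟨s, hs⟩ := exists_mem_of_ne_zero hρ
      exact (Finset.prod_eq_zero (hT (mem_toFinset.2 hs))
        (Nat.choose_eq_zero_of_lt (count_pos.2 hs))).symm
  | cons a σ ih =>
    rw [powerset_cons, count_add]
    by_cases ha : a ∈ ρ
    · obtain ⟨ρ', rfl⟩ := exists_cons_of_mem ha
      have haT : a ∈ T := hT (mem_toFinset.2 ha)
      have hρ'T : ρ'.toFinset ⊆ T := fun s hs => hT (by simp_all)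
      rw [count_map_eq_count' _ _ fun _ _ => (cons_inj_right a).1, ih _ hT, ih _ hρ'T,
        ← Finset.mul_prod_erase _ _ haT, ← Finset.mul_prod_erase _ _ haT,
        ← Finset.mul_prod_erase _ _ haT, count_cons_self, count_cons_self,
        Nat.choose_succ_succ', add_mul, add_comm]
      congr 2 <;> refine Finset.prod_congr rfl fun s hs => ?_ <;>
        simp only [count_cons_of_ne (Finset.ne_of_mem_erase hs)]
    · have hmap : (σ.powerset.map (cons a)).count ρ = 0 :=
        count_eq_zero.2 fun h => by
          obtain ⟨μ, -, rfl⟩ := mem_map.1 h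
          exact ha (mem_cons_self a μ)
      rw [hmap, add_zero, ih _ hT]
      refine Finset.prod_congr rfl fun s _ => ?_
      by_cases hs : s = a
      · subst hs
        rw [count_eq_zero.2 ha, Nat.choose_zero_right, Nat.choose_zero_right]
      · rw [count_cons_of_ne hs]

theorem count_powerset (σ ρ : Multiset α) :
    σ.powerset.count ρ = ∏ s ∈ ρ.toFinset, (σ.count s).choose (ρ.count s) :=
  count_powerset_eq_prod_choose_of_subset σ ρ subset_rfl

theorem sum_map_sum_filter_eq_sum_count_smul {β M : Type*} [AddCommMonoid M] (m : Multiset α)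
    (s : Finset β) (g : β → α) (F : β → M) :
    (m.map fun a => ∑ x ∈ s.filter (fun x => g x = a), F x).sum
      = ∑ x ∈ s, m.count (g x) • F x := by
  induction m using Multiset.induction_on with
  | empty => simp
  | cons a m ih =>
    rw [map_cons, sum_cons, ih, add_comm]
    simp only [count_cons, add_smul, ite_smul, one_smul, zero_smul, Finset.sum_add_distrib,
      Finset.sum_filter]

end Multiset

section MultisetLifting

variable {sd : Setoid S}

theorem classCount_add (s : S) (σ σ' : Multiset S) :
    classCount sd s (σ + σ') = classCount sd s σ + classCount sd s σ' := by
  simp [classCount, Multiset.filter_add]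

theorem mlift_symm {σ σ' : Multiset S} (h : mlift sd σ σ') : mlift sd σ' σ :=
  fun s => (h s).symm

theorem mlift_trans {σ σ' σ'' : Multiset S} (h : mlift sd σ σ') (h' : mlift sd σ' σ'') :
    mlift sd σ σ'' :=
  fun s => (h s).trans (h' s)

theorem mlift_add_left_iff (μ : Multiset S) {σ σ' : Multiset S} :
    mlift sd (μ + σ) (μ + σ') ↔ mlift sd σ σ' := by
  simp only [mlift, classCount_add, Nat.add_left_cancel_iff]

theorem mlift_add_right_iff (μ : Multiset S) {σ σ' : Multiset S} :
    mlift sd (σ + μ) (σ' + μ) ↔ mlift sd σ σ' := by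
  simp only [mlift, classCount_add, Nat.add_right_cancel_iff]

theorem mlift_cons_cons {s s' : S} (h : sd.r s s') (σ : Multiset S) :
    mlift sd (s ::ₘ σ) (s' ::ₘ σ) := fun t => by
  have hiff : sd.r t s ↔ sd.r t s' := ⟨fun ht => sd.trans ht h, fun ht => sd.trans ht (sd.symm h)⟩
  by_cases ht : sd.r t s <;> simp [classCount, ht, ← hiff]

theorem eq_zero_of_mlift_zero {σ : Multiset S} (h : mlift sd 0 σ) : σ = 0 := by
  refine Multiset.eq_zero_of_forall_notMem fun s hs => ?_
  have hpos : 0 < classCount sd s σ :=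
    Multiset.card_pos_iff_exists_mem.2 ⟨s, Multiset.mem_filter.2 ⟨hs, sd.refl s⟩⟩
  have h0 := h s
  rw [classCount, Multiset.filter_zero, Multiset.card_zero] at h0
  exact hpos.ne h0

theorem exists_cons_of_mlift_cons {s : S} {σ σ' : Multiset S} (h : mlift sd (s ::ₘ σ) σ') :
    ∃ s' γ, sd.r s s' ∧ σ' = s' ::ₘ γ ∧ mlift sd σ γ := by
  have hpos : 0 < classCount sd s σ' := by
    rw [← h s]
    exact Multiset.card_pos_iff_exists_mem.2
      ⟨s, Multiset.mem_filter.2 ⟨Multiset.mem_cons_self s σ, sd.refl s⟩⟩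
  obtain ⟨s', hs'⟩ := Multiset.card_pos_iff_exists_mem.1 hpos
  obtain ⟨hs'σ', hss'⟩ := Multiset.mem_filter.1 hs'
  obtain ⟨γ, rfl⟩ := Multiset.exists_cons_of_mem hs'σ'
  refine ⟨s', γ, hss', rfl, ?_⟩
  rw [← mlift_add_left_iff {s'}, Multiset.singleton_add, Multiset.singleton_add]
  exact mlift_trans (mlift_cons_cons (sd.symm hss') σ) h

/-- `≈ₗ` is the equivalence generated by replacing one species by an equivalent one, so a
function on states that is invariant under such replacements is `≈ₗ`-invariant. -/
theorem eq_of_mlift {α : Type*} {f : Multiset S → α}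
    (hf : ∀ s s' γ, sd.r s s' → f (s ::ₘ γ) = f (s' ::ₘ γ)) {σ σ' : Multiset S}
    (h : mlift sd σ σ') : f σ = f σ' := by
  induction σ using Multiset.induction_on generalizing σ' f with
  | empty => rw [eq_zero_of_mlift_zero h]
  | cons s σ ih =>
    obtain ⟨s', γ, hss', rfl, hσγ⟩ := exists_cons_of_mlift_cons h
    have hcons : ∀ t t' μ, sd.r t t' → f (s' ::ₘ t ::ₘ μ) = f (s' ::ₘ t' ::ₘ μ) :=
      fun t t' μ htt' => by
        rw [Multiset.cons_swap, hf t t' _ htt', Multiset.cons_swap]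
    rw [hf s s' σ hss']
    exact ih (f := fun μ => f (s' ::ₘ μ)) hcons hσγ

end MultisetLifting

/-- The diagonal entry of a rate-matrix row is minus the sum of the others, so the row's sum
over `B` weights each off-diagonal rate by the change in the indicator of `B`. -/
theorem sum_filter_generator_eq {α : Type*} [DecidableEq α] (g : α → ℝ) (T : Finset α)
    (x : α) (B : Set α) :
    ∑ y ∈ (insert x T).filter (· ∈ B), (if x = y then -∑ y' ∈ T.erase x, g y' else g y)
      = ∑ y ∈ T, g y * (B.indicator 1 y - B.indicator 1 x) := by
  have hoff : ∀ y ∈ T.erase x, (if y ∈ B then (if x = y then -∑ y' ∈ T.erase x, g y' else g y)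
      else 0) = g y * B.indicator 1 y := fun y hy => by
    simp [(Finset.ne_of_mem_erase hy).symm, Set.indicator_apply]
  have hins : insert x T = insert x (T.erase x) := by ext; simp; tauto
  rw [← Finset.sum_erase T (a := x) (by simp), hins, Finset.sum_filter,
    Finset.sum_insert (Finset.notMem_erase x T), if_pos rfl, Finset.sum_congr rfl hoff]
  by_cases hx : x ∈ B <;>
    simp [hx, mul_sub, Finset.sum_sub_distrib, neg_add_eq_sub]

theorem sum_sum_filter_mul_eq {α β : Type*} [DecidableEq α] (s : Finset β) (P : β → Prop)
    [DecidablePred P] (g : β → α) (f : β → ℝ) (h : α → ℝ) {t : Finset α}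
    (ht : ∀ x ∈ s.filter P, g x ∈ t) :
    ∑ y ∈ t, (∑ x ∈ s.filter (fun x => P x ∧ g x = y), f x) * h y
      = ∑ x ∈ s.filter P, f x * h (g x) := by
  rw [← Finset.sum_fiberwise_of_maps_to ht]
  refine Finset.sum_congr rfl fun y _ => ?_
  rw [Finset.sum_mul, Finset.filter_filter]
  exact Finset.sum_congr rfl fun x hx => by rw [(Finset.mem_filter.1 hx).2.2]

section RateFormulas

variable (R : Finset (Reaction S))

theorem rrSet_eq_sum_reactions (ρ : Multiset S) (B : Set (Multiset S)) :
    rrSet R ρ B = ∑ x ∈ R.filter (·.reag = ρ),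
      x.rate * (B.indicator 1 x.prod - B.indicator 1 ρ) := by
  simp only [rrSet, rr]
  rw [sum_filter_generator_eq]
  exact sum_sum_filter_mul_eq R (·.reag = ρ) Reaction.prod Reaction.rate _
    fun x hx => Finset.mem_image_of_mem _ (Finset.mem_filter.1 hx).1

theorem qSet_eq_sum_reactions (σ : Multiset S) (B : Set (Multiset S)) :
    qSet R σ B = ∑ x ∈ R.filter (·.reag ≤ σ),
      propensity σ x * (B.indicator 1 (σ - x.reag + x.prod) - B.indicator 1 σ) := by
  simp only [qSet, q]
  rw [sum_filter_generator_eq]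
  exact sum_sum_filter_mul_eq R (·.reag ≤ σ) (fun x => σ - x.reag + x.prod) (propensity σ) _
    fun x hx => Finset.mem_image_of_mem _ hx

theorem propensity_eq_rate_mul_count_powerset (σ : Multiset S) (x : Reaction S) :
    propensity σ x = x.rate * σ.powerset.count x.reag := by
  rw [propensity, Multiset.count_powerset, Nat.cast_prod]

end RateFormulas

section MassAction

variable (R : Finset (Reaction S))

/-- Each sub-multiset `ρ` of the molecules of `σ` fires as a reagent multiset: mass-action
propensities count the ways of picking `ρ` out of `σ`. -/
theorem qSet_eq_sum_powerset (σ : Multiset S) (B : Set (Multiset S)) :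
    qSet R σ B = (σ.powerset.map fun ρ => rrSet R ρ {π | σ - ρ + π ∈ B}).sum := by
  let k (x : Reaction S) : ℝ :=
    x.rate * (B.indicator 1 (σ - x.reag + x.prod) - B.indicator 1 σ)
  have hρ : ∀ ρ ∈ σ.powerset,
      rrSet R ρ {π | σ - ρ + π ∈ B} = ∑ x ∈ R.filter (·.reag = ρ), k x := fun ρ hρ => by
    rw [rrSet_eq_sum_reactions]
    refine Finset.sum_congr rfl fun x hx => ?_
    simp [k, (Finset.mem_filter.1 hx).2, Set.indicator_apply,
      tsub_add_cancel_of_le (Multiset.mem_powerset.1 hρ)]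
  rw [Multiset.map_congr rfl hρ, Multiset.sum_map_sum_filter_eq_sum_count_smul,
    qSet_eq_sum_reactions]
  refine Finset.sum_filter_of_ne (fun x _ hx => ?_) |>.trans
    (Finset.sum_congr rfl fun x _ => ?_)
  · by_contra hle
    rw [propensity_eq_rate_mul_count_powerset,
      Multiset.count_eq_zero.2 (mt Multiset.mem_powerset.1 hle)] at hx
    simp at hx
  · rw [propensity_eq_rate_mul_count_powerset, nsmul_eq_mul, mul_assoc, mul_left_comm]

end MassAction

section SpeciesEquivalence

variable (R : Finset (Reaction S))

def exitRate (ρ : Multiset S) : ℝ := ∑ x ∈ R.filter (·.reag = ρ), x.rate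

theorem rrSet_eq_zero_of_notMem_reags {ρ : Multiset S} (h : ρ ∉ Reags R)
    (B : Set (Multiset S)) : rrSet R ρ B = 0 := by
  rw [rrSet_eq_sum_reactions]
  refine Finset.sum_eq_zero fun x hx => absurd ?_ h
  obtain ⟨hxR, rfl⟩ := Finset.mem_filter.1 hx
  exact Finset.mem_image_of_mem _ hxR

theorem rrSet_eq_neg_indicator_mul_exitRate {B : Set (Multiset S)} (hB : ∀ π ∈ Prods R, π ∉ B)
    (ρ : Multiset S) : rrSet R ρ B = -(B.indicator 1 ρ * exitRate R ρ) := by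
  rw [rrSet_eq_sum_reactions, exitRate, Finset.mul_sum, ← Finset.sum_neg_distrib]
  refine Finset.sum_congr rfl fun x hx => ?_
  rw [Set.indicator_of_notMem (hB _ (Finset.mem_image_of_mem _ (Finset.mem_filter.1 hx).1))]
  ring

theorem exitRate_eq_sum_rrSet_classes (sd : Setoid S) {ρ : Multiset S}
    (hρ : ∀ π ∈ Prods R, ¬ mlift sd π ρ) :
    exitRate R ρ = ∑ c ∈ (Prods R).image (Quotient.mk (mliftSetoid sd)),
      rrSet R ρ {π | c = Quotient.mk _ π} := by
  have hρc : ∀ c ∈ (Prods R).image (Quotient.mk (mliftSetoid sd)),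
      ρ ∉ {π | c = Quotient.mk _ π} := by
    intro c hc hcρ
    obtain ⟨π₀, hπ₀, rfl⟩ := Finset.mem_image.1 hc
    exact hρ π₀ hπ₀ (Quotient.exact hcρ)
  simp only [exitRate, rrSet_eq_sum_reactions]
  rw [Finset.sum_comm]
  refine Finset.sum_congr rfl fun x hx => ?_
  have hxc : Quotient.mk (mliftSetoid sd) x.prod ∈ (Prods R).image (Quotient.mk _) :=
    Finset.mem_image_of_mem _ (Finset.mem_image_of_mem _ (Finset.mem_filter.1 hx).1)
  have hsum : ∑ c ∈ (Prods R).image (Quotient.mk (mliftSetoid sd)),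
      ({π | c = Quotient.mk _ π}.indicator (1 : Multiset S → ℝ) x.prod
        - {π | c = Quotient.mk _ π}.indicator 1 ρ) = 1 := calc
    _ = ∑ c ∈ (Prods R).image (Quotient.mk (mliftSetoid sd)),
        if c = ⟦x.prod⟧ then (1 : ℝ) else 0 := Finset.sum_congr rfl fun c hc => by
      simp only [Set.indicator_of_notMem (hρc c hc), sub_zero, Set.indicator_apply,
        Set.mem_ofPred_eq, Pi.one_apply]
    _ = 1 := by simp [hxc]
  rw [← Finset.mul_sum, hsum, mul_one]

variable {sd : Setoid S} {R}

theorem exitRate_cons_eq_of_isSE (hse : isSE sd R) {s s' : S} (h : sd.r s s') {γ : Multiset S}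
    (hre : s ::ₘ γ ∈ Reags R ∨ s' ::ₘ γ ∈ Reags R)
    (hno : ∀ π ∈ Prods R, ¬ mlift sd π (s ::ₘ γ)) :
    exitRate R (s ::ₘ γ) = exitRate R (s' ::ₘ γ) := by
  have hno' : ∀ π ∈ Prods R, ¬ mlift sd π (s' ::ₘ γ) := fun π hπ hπs =>
    hno π hπ (mlift_trans hπs (mlift_symm (mlift_cons_cons h γ)))
  rw [exitRate_eq_sum_rrSet_classes R sd hno, exitRate_eq_sum_rrSet_classes R sd hno']
  refine Finset.sum_congr rfl fun c hc => ?_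
  obtain ⟨π₀, hπ₀, rfl⟩ := Finset.mem_image.1 hc
  have hclass : {π | ⟦π₀⟧ = Quotient.mk (mliftSetoid sd) π} = {π | mlift sd π₀ π} :=
    Set.ext fun _ => Quotient.eq
  rw [hclass]
  exact hse s s' h γ hre π₀ hπ₀

theorem rrSet_cons_eq_of_isSE (hse : isSE sd R) {s s' : S} (h : sd.r s s') (γ π₁ : Multiset S) :
    rrSet R (s ::ₘ γ) {π | mlift sd π₁ π} = rrSet R (s' ::ₘ γ) {π | mlift sd π₁ π} := by
  by_cases hre : s ::ₘ γ ∈ Reags R ∨ s' ::ₘ γ ∈ Reags R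
  swap
  · push Not at hre
    rw [rrSet_eq_zero_of_notMem_reags R hre.1, rrSet_eq_zero_of_notMem_reags R hre.2]
  by_cases hprod : ∃ π₀ ∈ Prods R, mlift sd π₁ π₀
  · obtain ⟨π₀, hπ₀, h₁₀⟩ := hprod
    have hclass : {π | mlift sd π₁ π} = {π | mlift sd π₀ π} :=
      Set.ext fun π => ⟨mlift_trans (mlift_symm h₁₀), mlift_trans h₁₀⟩
    rw [hclass]
    exact hse s s' h γ hre π₀ hπ₀
  push Not at hprod
  have hB : ∀ π ∈ Prods R, π ∉ {π | mlift sd π₁ π} := hprod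
  rw [rrSet_eq_neg_indicator_mul_exitRate R hB, rrSet_eq_neg_indicator_mul_exitRate R hB]
  by_cases hin : mlift sd π₁ (s ::ₘ γ)
  · have hin' : mlift sd π₁ (s' ::ₘ γ) := mlift_trans hin (mlift_cons_cons h γ)
    have hno : ∀ π ∈ Prods R, ¬ mlift sd π (s ::ₘ γ) :=
      fun π hπ hπs => hprod π hπ (mlift_trans hin (mlift_symm hπs))
    rw [Set.indicator_of_mem hin, Set.indicator_of_mem hin', Pi.one_apply, Pi.one_apply,
      exitRate_cons_eq_of_isSE hse h hre hno]
  · have hin' : ¬ mlift sd π₁ (s' ::ₘ γ) :=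
      fun h' => hin (mlift_trans h' (mlift_symm (mlift_cons_cons h γ)))
    rw [Set.indicator_of_notMem hin, Set.indicator_of_notMem hin', zero_mul, zero_mul]

end SpeciesEquivalence

section Lumpability

variable {sd : Setoid S}

theorem sum_map_powerset_eq_of_mlift {M : Type*} [AddCommMonoid M] {F : Multiset S → M}
    (hF : ∀ ρ ρ', mlift sd ρ ρ' → F ρ = F ρ') {σ σ' : Multiset S} (h : mlift sd σ σ') :
    (σ.powerset.map F).sum = (σ'.powerset.map F).sum := by
  refine eq_of_mlift (f := fun σ => (σ.powerset.map F).sum) (fun s s' γ hss' => ?_) h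
  simp only [Multiset.powerset_cons, Multiset.map_add, Multiset.map_map, Multiset.sum_add,
    Function.comp_def, fun ρ => hF _ _ (mlift_cons_cons hss' ρ)]

variable {R : Finset (Reaction S)}

theorem rrSet_eq_of_mlift (hse : isSE sd R) {ρ ρ' : Multiset S} (h : mlift sd ρ ρ')
    (π₁ : Multiset S) : rrSet R ρ {π | mlift sd π₁ π} = rrSet R ρ' {π | mlift sd π₁ π} :=
  eq_of_mlift (f := fun ρ => rrSet R ρ {π | mlift sd π₁ π})
    (fun _ _ γ hss' => rrSet_cons_eq_of_isSE hse hss' γ π₁) h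

/-- The set `{π | σ + π ≈ₗ τ + ρ}` is either empty or a single `≈ₗ`-class. -/
theorem rrSet_add_eq_of_mlift (hse : isSE sd R) {ρ ρ' : Multiset S} (h : mlift sd ρ ρ')
    (σ τ : Multiset S) :
    rrSet R ρ {π | mlift sd (σ + π) (τ + ρ)} = rrSet R ρ' {π | mlift sd (σ + π) (τ + ρ')} := by
  have hτρ : mlift sd (τ + ρ) (τ + ρ') := (mlift_add_left_iff τ).2 h
  have hset : {π | mlift sd (σ + π) (τ + ρ)} = {π | mlift sd (σ + π) (τ + ρ')} :=
    Set.ext fun π => ⟨fun hπ => mlift_trans hπ hτρ, fun hπ => mlift_trans hπ (mlift_symm hτρ)⟩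
  rw [hset]
  by_cases hne : ∃ π₁, mlift sd (σ + π₁) (τ + ρ')
  · obtain ⟨π₁, hπ₁⟩ := hne
    have hclass : {π | mlift sd (σ + π) (τ + ρ')} = {π | mlift sd π₁ π} := Set.ext fun π =>
      ⟨fun hπ => (mlift_add_left_iff σ).1 (mlift_trans hπ₁ (mlift_symm hπ)),
        fun hπ => mlift_trans (mlift_symm ((mlift_add_left_iff σ).2 hπ)) hπ₁⟩
    rw [hclass]
    exact rrSet_eq_of_mlift hse h π₁
  · push Not at hne
    have hempty : {π | mlift sd (σ + π) (τ + ρ')} = ∅ := Set.eq_empty_of_forall_notMem hne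
    simp [hempty, rrSet_eq_sum_reactions]

variable (R)

theorem qSet_mlift_eq_sum_powerset (σ τ : Multiset S) :
    qSet R σ {θ | mlift sd θ τ}
      = (σ.powerset.map fun ρ => rrSet R ρ {π | mlift sd (σ + π) (τ + ρ)}).sum := by
  rw [qSet_eq_sum_powerset]
  refine congrArg _ (Multiset.map_congr rfl fun ρ hρ => congrArg _ (Set.ext fun π => ?_))
  have hσ : σ - ρ + π + ρ = σ + π := by
    rw [add_right_comm, tsub_add_cancel_of_le (Multiset.mem_powerset.1 hρ)]
  rw [Set.mem_ofPred_eq, Set.mem_ofPred_eq, Set.mem_ofPred_eq, ← mlift_add_right_iff ρ, hσ]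

end Lumpability

theorem isSE_implies_lumpable_general (sd : Setoid S) (R : Finset (Reaction S))
    (hse : isSE sd R) :
    ∀ σ σ' τ : Multiset S, mlift sd σ σ' →
      qSet R σ {θ | mlift sd θ τ} = qSet R σ' {θ | mlift sd θ τ} := by
  intro σ σ' τ h
  have hσσ' : ∀ ρ, {π | mlift sd (σ + π) (τ + ρ)} = {π | mlift sd (σ' + π) (τ + ρ)} :=
    fun ρ => Set.ext fun π =>
      have hπ : mlift sd (σ + π) (σ' + π) := (mlift_add_right_iff π).2 h
      ⟨mlift_trans (mlift_symm hπ), mlift_trans hπ⟩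
  rw [qSet_mlift_eq_sum_powerset, qSet_mlift_eq_sum_powerset]
  simp only [hσσ']
  exact sum_map_powerset_eq_of_mlift (fun ρ ρ' hρ => rrSet_add_eq_of_mlift hse hρ σ' τ) h

/-- sufficiency of SE for ordinary lumpability: if `sd` is a species
equivalence for `R` then its multiset lifting is an ordinarily lumpable partition of the
CTMC of `R` on the full state space. -/
theorem isSE_implies_lumpable (sd : Setoid S) (R : Finset (Reaction S)) (hpos : posRates R)
    (hse : isSE sd R) :
    ∀ σ σ' τ : Multiset S, mlift sd σ σ' →
      qSet R σ {θ | mlift sd θ τ} = qSet R σ' {θ | mlift sd θ τ} :=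
  isSE_implies_lumpable_general sd R hse

end
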